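/- For every type A of system F and every type variable X: (1) α : O ⊢_F 𝓘_{A,X} : ∀Y { A[Y/X] → A[Y°/X] }, and (2) α : O ⊢_F 𝓙_{A,X} : ∀Y { A[Y°/X] → A[Y/X] }, where Y is a fresh variable. -/

import Mathlib

set_option maxHeartbeats 1000000

/-- Untyped λ-terms in de Bruijn representation. -/
inductive Trm : Type
  | var : ℕ → Trm
  | app : Trm → Trm → Trm
  | lam : Trm → Trm
  deriving DecidableEq

namespace Trm

/-- The set of free variables of a term (as de Bruijn indices). -/
def fv : Trm → Set ℕ
  | var n => {n}
  | app u v => fv u ∪ fv v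
  | lam u => {n | n + 1 ∈ fv u}

/-- A term is closed if it has no free variables. -/
def Closed (t : Trm) : Prop := fv t = ∅

/-- λI-terms: abstraction is allowed only on variables occurring free in the body. -/
inductive IsLI : Trm → Prop
  | var (n : ℕ) : IsLI (var n)
  | app {u v : Trm} : IsLI u → IsLI v → IsLI (app u v)
  | lam {u : Trm} : IsLI u → 0 ∈ fv u → IsLI (lam u)

/-- Lifting of free variables ≥ d. -/
def lift (d : ℕ) : Trm → Trm
  | var n => if n < d then var n else var (n + 1)
  | app u v => app (lift d u) (lift d v)
  | lam u => lam (lift (d + 1) u)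

def liftTimes (k : ℕ) (t : Trm) : Trm := (lift 0)^[k] t

/-- Capture-avoiding substitution of the k-th free variable. -/
def subst : Trm → ℕ → Trm → Trm
  | var n, k, v => if n < k then var n else if n = k then liftTimes k v else var (n - 1)
  | app a b, k, v => app (subst a k v) (subst b k v)
  | lam a, k, v => lam (subst a (k + 1) v)

end Trm

/-- Types of system F with a fixed type constant O, in de Bruijn representation. -/
inductive Ty : Type
  | var : ℕ → Ty
  | cO : Ty
  | arr : Ty → Ty → Ty
  | all : Ty → Ty
  deriving DecidableEq

namespace Ty

/-- Free type variables. -/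
def tfv : Ty → Set ℕ
  | var n => {n}
  | cO => ∅
  | arr A B => tfv A ∪ tfv B
  | all A => {n | n + 1 ∈ tfv A}

/-- Lifting of free type variables ≥ d. -/
def tlift (d : ℕ) : Ty → Ty
  | var n => if n < d then var n else var (n + 1)
  | cO => cO
  | arr A B => arr (tlift d A) (tlift d B)
  | all A => all (tlift (d + 1) A)

def tliftTimes (k : ℕ) (A : Ty) : Ty := (tlift 0)^[k] A

/-- Substitution of the k-th free type variable. -/
def tsubst : Ty → ℕ → Ty → Ty
  | var n, k, G => if n < k then var n else if n = k then tliftTimes k G else var (n - 1)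
  | cO, _, _ => cO
  | arr A B, k, G => arr (tsubst A k G) (tsubst B k G)
  | all A, k, G => all (tsubst A (k + 1) G)

/-- Proper types. -/
def Proper : Ty → Prop
  | var _ => True
  | cO => True
  | arr A B => Proper A ∧ Proper B
  | all A => Proper A ∧ 0 ∈ tfv A

end Ty

/-- Typing judgments of system F (restricted to proper types:
the rule (∀e) requires X free in A and instantiates at proper types only). -/
inductive Typing : List Ty → Trm → Ty → Prop
  | ax {Γ : List Ty} {n : ℕ} {A : Ty} :
      Γ[n]? = some A → (∀ B ∈ Γ, B.Proper) → Typing Γ (.var n) A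
  | arrI {Γ : List Ty} {A B : Ty} {t : Trm} :
      A.Proper → Typing (A :: Γ) t B → Typing Γ (.lam t) (.arr A B)
  | arrE {Γ : List Ty} {A B : Ty} {u v : Trm} :
      Typing Γ u (.arr A B) → Typing Γ v A → Typing Γ (.app u v) B
  | allI {Γ : List Ty} {A : Ty} {t : Trm} :
      0 ∈ Ty.tfv A → Typing (Γ.map (Ty.tlift 0)) t A → Typing Γ t (.all A)
  | allE {Γ : List Ty} {A : Ty} {t : Trm} (G : Ty) :
      G.Proper → 0 ∈ Ty.tfv A → Typing Γ t (.all A) → Typing Γ t (A.tsubst 0 G)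

/-- A[G/X] placed under one extra (second-order) binder: the occurrences of the
ambient variable X are replaced by G (expressed relative to the new binder, so that
`Ty.var 0` in G denotes the freshly bound variable Y), and the other free variables
are shifted to account for the new binder. -/
def repl (X : ℕ) (G : Ty) : ℕ → Ty → Ty
  | d, .var n => if n < d then .var n else if n = X + d then Ty.tliftTimes d G else .var (n + 1)
  | _, .cO => .cO
  | d, .arr A B => .arr (repl X G d A) (repl X G d B)
  | d, .all A => .all (repl X G (d + 1) A)

/-- Conjunction A ∧ B = ∀X {(A → (B → X)) → X} with X fresh. -/
def conj (A B : Ty) : Ty :=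
  .all (.arr (.arr (A.tlift 0) (.arr (B.tlift 0) (.var 0))) (.var 0))

/-- Y° = O → (Y ∧ O), where Y is the freshly bound variable `Ty.var 0`. -/
def Ydeg : Ty := .arr .cO (conj (.var 0) .cO)

/-- U = λx λd ⟨x, α⟩ where α is the term variable with de Bruijn index a. -/
def Uat (a : ℕ) : Trm :=
  .lam (.lam (.lam (.app (.app (.var 0) (.var 2)) (.var (a + 3)))))

/-- V = λx (x) α 𝟏 where α is the term variable with de Bruijn index a. -/
def Vat (a : ℕ) : Trm :=
  .lam (.app (.app (.var 0) (.var (a + 1))) (.lam (.lam (.var 1))))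

mutual
  /-- The term 𝓘_{A,X}; the parameter a is the de Bruijn index of the constant α. -/
  def Itm : Ty → ℕ → ℕ → Trm
    | .var Y, X, a => if Y = X then Uat a else .lam (.var 0)
    | .cO, _, _ => .lam (.var 0)
    | .arr B C, X, a =>
        .lam (.lam (.app (Itm C X (a + 2)) (.app (.var 1) (.app (Jtm B X (a + 2)) (.var 0)))))
    | .all B, X, a => .lam (.app (Itm B (X + 1) (a + 1)) (.var 0))
  /-- The term 𝓙_{A,X}. -/
  def Jtm : Ty → ℕ → ℕ → Trm
    | .var Y, X, a => if Y = X then Vat a else .lam (.var 0)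
    | .cO, _, _ => .lam (.var 0)
    | .arr B C, X, a =>
        .lam (.lam (.app (Jtm C X (a + 2)) (.app (.var 1) (.app (Itm B X (a + 2)) (.var 0)))))
    | .all B, X, a => .lam (.app (Jtm B (X + 1) (a + 1)) (.var 0))
end

/-!
Both judgments are proved together by induction on `A`, for an arbitrary context in which `α : O`
and `Y` are free. At `X` itself, `U` pairs its argument with `α` to produce `Y° = O → (Y ∧ O)`,
and `V` applies its argument to `α` and projects the first component. Other variables and `O` are
handled by the identity. At `B → C` the two families swap roles contravariantly, and at `∀ Z B`
the body is handled under the new binder, where `X` and `Y` become `X + 1` and `Y + 1`.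
Since `𝓘_{A,X}` and `𝓙_{A,X}` depend only on where `X` occurs in `A`, the statement follows by
weakening `A` past the binder `∀ Y` and then applying `(∀i)`.
-/

namespace Ty

lemma mem_tfv_tlift {A : Ty} {n : ℕ} (d : ℕ) (h : n ∈ A.tfv) :
    (if n < d then n else n + 1) ∈ (A.tlift d).tfv := by
  induction A generalizing n d with
  | var m =>
    obtain rfl : n = m := h
    simp only [tlift]
    split <;> simp [tfv]
  | cO => exact h.elim
  | arr B C ihB ihC => exact h.imp (ihB d) (ihC d)
  | all B ih =>
    have := ih (d + 1) h
    show _ + 1 ∈ (B.tlift (d + 1)).tfv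
    convert this using 1
    split_ifs <;> omega

lemma mem_tfv_tlift_of_lt {A : Ty} {n d : ℕ} (h : n ∈ A.tfv) (hn : n < d) :
    n ∈ (A.tlift d).tfv := by
  simpa [hn] using mem_tfv_tlift d h

lemma mem_tfv_tlift_of_le {A : Ty} {n d : ℕ} (h : n ∈ A.tfv) (hn : d ≤ n) :
    n + 1 ∈ (A.tlift d).tfv := by
  simpa [Nat.not_lt.2 hn] using mem_tfv_tlift d h

lemma Proper.tlift {A : Ty} (h : A.Proper) (d : ℕ) : (A.tlift d).Proper := by
  induction A generalizing d with
  | var m => simp only [Ty.tlift]; split <;> trivial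
  | cO => trivial
  | arr B C ihB ihC => exact ⟨ihB h.1 d, ihC h.2 d⟩
  | all B ih => exact ⟨ih h.1 (d + 1), mem_tfv_tlift_of_lt h.2 d.succ_pos⟩

lemma tliftTimes_succ (k : ℕ) (A : Ty) : tliftTimes (k + 1) A = (tliftTimes k A).tlift 0 :=
  Function.iterate_succ_apply' _ _ _

lemma mem_tfv_tliftTimes {G : Ty} {n : ℕ} (d : ℕ) (h : n ∈ G.tfv) :
    n + d ∈ (tliftTimes d G).tfv := by
  induction d with
  | zero => exact h
  | succ d ih => rw [tliftTimes_succ]; exact mem_tfv_tlift_of_le ih (Nat.zero_le _)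

lemma Proper.tliftTimes {G : Ty} (h : G.Proper) (d : ℕ) : (Ty.tliftTimes d G).Proper := by
  induction d with
  | zero => exact h
  | succ d ih => rw [tliftTimes_succ]; exact ih.tlift 0

lemma tliftTimes_var (n d : ℕ) : tliftTimes d (var n) = var (n + d) := by
  induction d with
  | zero => rfl
  | succ d ih => rw [tliftTimes_succ, ih]; rfl

lemma tsubst_tlift_succ (C : Ty) (d : ℕ) : (C.tlift (d + 1)).tsubst d (var 0) = C := by
  induction C generalizing d with
  | var n =>
    simp only [tlift]
    split_ifs with h
    · simp only [tsubst, tliftTimes_var]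
      split_ifs <;> first | rfl | (congr 1; omega)
    · simp only [tsubst, if_neg (by omega : ¬ n + 1 < d), if_neg (by omega : ¬ n + 1 = d)]
      rfl
  | cO => rfl
  | arr B C ihB ihC => simp [tlift, tsubst, ihB, ihC]
  | all B ih => simp [tlift, tsubst, ih]

/-- Substitution of `G` for the variable `X + d` under `d` binders, without renumbering the
other variables. -/
def sub (X : ℕ) (G : Ty) : ℕ → Ty → Ty
  | d, var n => if n = X + d then tliftTimes d G else var n
  | _, cO => cO
  | d, arr A B => arr (sub X G d A) (sub X G d B)
  | d, all A => all (sub X G (d + 1) A)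

lemma mem_tfv_sub {A G : Ty} {n X d : ℕ} (h : n ∈ A.tfv) (hn : n ≠ X + d) :
    n ∈ (sub X G d A).tfv := by
  induction A generalizing n d with
  | var m =>
    obtain rfl : n = m := h
    simp [sub, hn, tfv]
  | cO => exact h.elim
  | arr B C ihB ihC => exact h.imp (ihB · hn) (ihC · hn)
  | all B ih => exact ih (d := d + 1) h (by omega)

lemma mem_tfv_sub_of_mem {A G : Ty} {m X : ℕ} (d : ℕ) (h : X + d ∈ A.tfv) (hm : m ∈ G.tfv) :
    m + d ∈ (sub X G d A).tfv := by
  induction A generalizing d with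
  | var n =>
    obtain rfl : X + d = n := h
    simpa [sub] using mem_tfv_tliftTimes d hm
  | cO => exact h.elim
  | arr B C ihB ihC => exact h.imp (ihB d) (ihC d)
  | all B ih => exact ih (d + 1) h

lemma Proper.sub {A G : Ty} (hA : A.Proper) (hG : G.Proper) (X d : ℕ) :
    (Ty.sub X G d A).Proper := by
  induction A generalizing d with
  | var n => simp only [Ty.sub]; split <;> first | exact hG.tliftTimes d | trivial
  | cO => trivial
  | arr B C ihB ihC => exact ⟨ihB hA.1 d, ihC hA.2 d⟩
  | all B ih => exact ⟨ih hA.1 (d + 1), mem_tfv_sub hA.2 (by omega)⟩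

lemma sub_succ (X : ℕ) (G B : Ty) (d : ℕ) :
    sub X G (d + 1) B = sub (X + 1) (G.tlift 0) d B := by
  induction B generalizing d with
  | var n =>
    have ht : tliftTimes (d + 1) G = tliftTimes d (G.tlift 0) :=
      Function.iterate_succ_apply _ _ _
    simp only [sub, ht, show (n = X + (d + 1)) = (n = X + 1 + d) by rw [Nat.add_right_comm]; rfl]
  | cO => rfl
  | arr B C ihB ihC => simp [sub, ihB, ihC]
  | all B ih => simp [sub, ih]

lemma repl_eq_sub (X : ℕ) (G A : Ty) (d : ℕ) :
    repl X G d A = sub (X + 1) G d (A.tlift d) := by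
  induction A generalizing d with
  | var n =>
    simp only [repl, tlift]
    split_ifs <;> simp_all [sub] <;> omega
  | cO => rfl
  | arr B C ihB ihC => simp [repl, tlift, sub, ihB, ihC]
  | all B ih => simp [repl, tlift, sub, ih]

end Ty

/-- `Y°` for the type variable `Y = var k`. -/
def YdegAt (k : ℕ) : Ty := .arr .cO (conj (.var k) .cO)

lemma tlift_YdegAt (k : ℕ) : (YdegAt k).tlift 0 = YdegAt (k + 1) := rfl

lemma proper_YdegAt (k : ℕ) : (YdegAt k).Proper :=
  ⟨trivial, ⟨⟨trivial, trivial, trivial⟩, trivial⟩, Or.inr rfl⟩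

lemma forall_proper_map_tlift {Γ : List Ty} (hΓ : ∀ B ∈ Γ, B.Proper) :
    ∀ B ∈ Γ.map (Ty.tlift 0), B.Proper := by
  simpa using fun B hB => (hΓ B hB).tlift 0

section Typing

variable {Γ : List Ty}

lemma typing_id (hΓ : ∀ B ∈ Γ, B.Proper) {A : Ty} (hA : A.Proper) :
    Typing Γ (.lam (.var 0)) (.arr A A) :=
  .arrI hA (.ax rfl (List.forall_mem_cons.2 ⟨hA, hΓ⟩))

lemma typing_Uat (hΓ : ∀ B ∈ Γ, B.Proper) {a : ℕ} (ha : Γ[a]? = some .cO) (k : ℕ) :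
    Typing Γ (Uat a) (.arr (.var k) (YdegAt k)) := by
  refine .arrI trivial (.arrI trivial (.allI (Or.inr rfl) (.arrI ⟨trivial, trivial, trivial⟩ ?_)))
  have hΓ' : ∀ B ∈ .arr (.var (k + 1)) (.arr .cO (.var 0)) :: .cO :: .var (k + 1) ::
      Γ.map (Ty.tlift 0), B.Proper := by
    simpa [Ty.Proper] using forall_proper_map_tlift hΓ
  exact .arrE (.arrE (.ax rfl hΓ') (.ax rfl hΓ')) (.ax (by simp [ha]) hΓ')

lemma typing_Vat (hΓ : ∀ B ∈ Γ, B.Proper) {a : ℕ} (ha : Γ[a]? = some .cO) (k : ℕ) :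
    Typing Γ (Vat a) (.arr (YdegAt k) (.var k)) := by
  have hΓ' : ∀ B ∈ YdegAt k :: Γ, B.Proper := List.forall_mem_cons.2 ⟨proper_YdegAt k, hΓ⟩
  have hpair : Typing (YdegAt k :: Γ) (.app (.var 0) (.var (a + 1))) (conj (.var k) .cO) :=
    .arrE (.ax rfl hΓ') (.ax (by simpa using ha) hΓ')
  have hfst : Typing (.cO :: .var k :: YdegAt k :: Γ) (.var 1) (.var k) :=
    .ax rfl (by simpa [Ty.Proper] using hΓ')
  exact .arrI (proper_YdegAt k)
    (.arrE (.allE (A := .arr (.arr (.var (k + 1)) (.arr .cO (.var 0))) (.var 0))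
      (.var k) trivial (Or.inr rfl) hpair) (.arrI trivial (.arrI trivial hfst)))

lemma typing_arrow_map (hΓ : ∀ B ∈ Γ, B.Proper) {B₁ B₂ C₁ C₂ : Ty} {i j : Trm}
    (hB₁ : B₁.Proper) (hB₂ : B₂.Proper) (hC₁ : C₁.Proper)
    (hi : Typing (B₂ :: .arr B₁ C₁ :: Γ) i (.arr C₁ C₂))
    (hj : Typing (B₂ :: .arr B₁ C₁ :: Γ) j (.arr B₂ B₁)) :
    Typing Γ (.lam (.lam (.app i (.app (.var 1) (.app j (.var 0))))))
      (.arr (.arr B₁ C₁) (.arr B₂ C₂)) := by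
  have hΓ' : ∀ B ∈ B₂ :: .arr B₁ C₁ :: Γ, B.Proper := by
    simpa [Ty.Proper, hB₁, hB₂, hC₁] using hΓ
  exact .arrI ⟨hB₁, hC₁⟩ (.arrI hB₂ (.arrE hi (.arrE (.ax rfl hΓ') (.arrE hj (.ax rfl hΓ')))))

lemma forall_proper_cons_all_tlift (hΓ : ∀ B ∈ Γ, B.Proper) {P : Ty} (hP : P.Proper)
    (h0P : 0 ∈ P.tfv) : ∀ B ∈ .all (P.tlift 1) :: Γ.map (Ty.tlift 0), B.Proper :=
  List.forall_mem_cons.2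
    ⟨⟨hP.tlift 1, Ty.mem_tfv_tlift_of_lt h0P Nat.one_pos⟩, forall_proper_map_tlift hΓ⟩

lemma typing_forall_map (hΓ : ∀ B ∈ Γ, B.Proper) {P Q : Ty} {t : Trm} (hP : P.Proper)
    (h0P : 0 ∈ P.tfv) (h0Q : 0 ∈ Q.tfv)
    (ht : Typing (.all (P.tlift 1) :: Γ.map (Ty.tlift 0)) t (.arr P Q)) :
    Typing Γ (.lam (.app t (.var 0))) (.arr (.all P) (.all Q)) := by
  have h0P' : 0 ∈ (P.tlift 1).tfv := Ty.mem_tfv_tlift_of_lt h0P Nat.one_pos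
  have hΓ' := forall_proper_cons_all_tlift hΓ hP h0P
  have hx : Typing (.all (P.tlift 1) :: Γ.map (Ty.tlift 0)) (.var 0) P := by
    simpa only [Ty.tsubst_tlift_succ] using (Typing.ax rfl hΓ').allE (.var 0) trivial h0P'
  exact .arrI ⟨hP, h0P⟩ (.allI h0Q (.arrE ht hx))

end Typing

lemma itm_jtm_tlift (C : Ty) {d X : ℕ} (hdX : d ≤ X) (a : ℕ) :
    Itm (C.tlift d) (X + 1) a = Itm C X a ∧ Jtm (C.tlift d) (X + 1) a = Jtm C X a := by
  induction C generalizing d X a with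
  | var Y =>
    by_cases h : Y < d
    · simp [Ty.tlift, h, Itm, Jtm, show Y ≠ X + 1 by omega, show Y ≠ X by omega]
    · simp [Ty.tlift, h, Itm, Jtm]
  | cO => simp [Ty.tlift, Itm, Jtm]
  | arr B C ihB ihC => simp [Ty.tlift, Itm, Jtm, ihB hdX, ihC hdX]
  | all B ih => simp [Ty.tlift, Itm, Jtm, ih (Nat.succ_le_succ hdX)]

/-- The two judgments for `A`, in any proper context in which `α : O` has index `a` and `Y` is
the type variable `k`. -/
def IJTyped (A : Ty) : Prop :=
  ∀ (X k a : ℕ) (Γ : List Ty), (∀ B ∈ Γ, B.Proper) → Γ[a]? = some .cO →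
    Typing Γ (Itm A X a) (.arr (Ty.sub X (.var k) 0 A) (Ty.sub X (YdegAt k) 0 A)) ∧
    Typing Γ (Jtm A X a) (.arr (Ty.sub X (YdegAt k) 0 A) (Ty.sub X (.var k) 0 A))

lemma ijTyped_var (Y : ℕ) : IJTyped (.var Y) := by
  intro X k a Γ hΓ ha
  by_cases hYX : Y = X
  · subst hYX
    simpa [Itm, Jtm, Ty.sub, Ty.tliftTimes] using ⟨typing_Uat hΓ ha k, typing_Vat hΓ ha k⟩
  · simpa [Itm, Jtm, Ty.sub, hYX] using typing_id hΓ (A := .var Y) trivial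

lemma ijTyped_cO : IJTyped .cO :=
  fun _ _ _ _ hΓ _ => ⟨typing_id hΓ trivial, typing_id hΓ trivial⟩

lemma IJTyped.arr {B C : Ty} (hB : B.Proper) (hC : C.Proper) (ihB : IJTyped B)
    (ihC : IJTyped C) : IJTyped (.arr B C) := by
  intro X k a Γ hΓ ha
  have pB : (Ty.sub X (.var k) 0 B).Proper := hB.sub (G := .var k) trivial X 0
  have pB' : (Ty.sub X (YdegAt k) 0 B).Proper := hB.sub (proper_YdegAt k) X 0
  have pC : (Ty.sub X (.var k) 0 C).Proper := hC.sub (G := .var k) trivial X 0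
  have pC' : (Ty.sub X (YdegAt k) 0 C).Proper := hC.sub (proper_YdegAt k) X 0
  have hΓI : ∀ D ∈ Ty.sub X (YdegAt k) 0 B :: .arr (Ty.sub X (.var k) 0 B) (Ty.sub X (.var k) 0 C)
      :: Γ, D.Proper := by
    simpa [Ty.Proper, pB, pB', pC] using hΓ
  have hΓJ : ∀ D ∈ Ty.sub X (.var k) 0 B :: .arr (Ty.sub X (YdegAt k) 0 B)
      (Ty.sub X (YdegAt k) 0 C) :: Γ, D.Proper := by
    simpa [Ty.Proper, pB, pB', pC'] using hΓ
  exact ⟨typing_arrow_map hΓ pB pB' pC (ihC X k (a + 2) _ hΓI (by simpa using ha)).1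
      (ihB X k (a + 2) _ hΓI (by simpa using ha)).2,
    typing_arrow_map hΓ pB' pB pC' (ihC X k (a + 2) _ hΓJ (by simpa using ha)).2
      (ihB X k (a + 2) _ hΓJ (by simpa using ha)).1⟩

lemma IJTyped.all {B : Ty} (hB : B.Proper) (h0 : 0 ∈ B.tfv) (ih : IJTyped B) :
    IJTyped (.all B) := by
  intro X k a Γ hΓ ha
  have hsub (G : Ty) : Ty.sub X G 0 (.all B) = .all (Ty.sub (X + 1) (G.tlift 0) 0 B) :=
    congrArg Ty.all (Ty.sub_succ X G B 0)
  rw [hsub, hsub, tlift_YdegAt]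
  have pP : (Ty.sub (X + 1) (.var (k + 1)) 0 B).Proper := hB.sub (G := .var (k + 1)) trivial _ 0
  have pQ : (Ty.sub (X + 1) (YdegAt (k + 1)) 0 B).Proper := hB.sub (proper_YdegAt _) _ 0
  have h0P : 0 ∈ (Ty.sub (X + 1) (.var (k + 1)) 0 B).tfv := Ty.mem_tfv_sub h0 (by omega)
  have h0Q : 0 ∈ (Ty.sub (X + 1) (YdegAt (k + 1)) 0 B).tfv := Ty.mem_tfv_sub h0 (by omega)
  exact ⟨typing_forall_map hΓ pP h0P h0Q
      (ih _ _ _ _ (forall_proper_cons_all_tlift hΓ pP h0P) (by simp [ha, Ty.tlift])).1,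
    typing_forall_map hΓ pQ h0Q h0P
      (ih _ _ _ _ (forall_proper_cons_all_tlift hΓ pQ h0Q) (by simp [ha, Ty.tlift])).2⟩

lemma Ty.Proper.ijTyped {A : Ty} (hA : A.Proper) : IJTyped A := by
  induction A with
  | var Y => exact ijTyped_var Y
  | cO => exact ijTyped_cO
  | arr B C ihB ihC => exact (ihB hA.1).arr hA.1 hA.2 (ihC hA.2)
  | all B ih => exact (ih hA.1).all hA.1 hA.2

/-- α : O ⊢_F 𝓘_{A,X} : ∀Y {A[Y/X] → A[Y°/X]} and
α : O ⊢_F 𝓙_{A,X} : ∀Y {A[Y°/X] → A[Y/X]} (A a proper type with X free in A). -/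
theorem stmt9 (A : Ty) (X : ℕ) (hA : A.Proper) (hX : X ∈ Ty.tfv A) :
    Typing [Ty.cO] (Itm A X 0)
      (.all (.arr (repl X (Ty.var 0) 0 A) (repl X Ydeg 0 A))) ∧
    Typing [Ty.cO] (Jtm A X 0)
      (.all (.arr (repl X Ydeg 0 A) (repl X (Ty.var 0) 0 A))) := by
  have hY : 0 ∈ (Ty.sub (X + 1) (.var 0) 0 (A.tlift 0)).tfv :=
    Ty.mem_tfv_sub_of_mem 0 (Ty.mem_tfv_tlift_of_le hX X.zero_le) rfl
  obtain ⟨hI, hJ⟩ := (hA.tlift 0).ijTyped (X + 1) 0 0 [.cO] (by simp [Ty.Proper]) rfl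
  obtain ⟨hItm, hJtm⟩ := itm_jtm_tlift A X.zero_le 0
  rw [← hItm, ← hJtm, show Ydeg = YdegAt 0 from rfl, Ty.repl_eq_sub, Ty.repl_eq_sub]
  exact ⟨.allI (Or.inl hY) hI, .allI (Or.inr hY) hJ⟩
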